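/- (Center Theorem at step 0.) If x, y ∈ Q₀, then m(x, y)² ≤ |v(θ* + x·ω) − v(θ* + y·ω)| ≤ 2δ₀, where m(x, y) := min(‖(x − y)·ω‖, ‖2θ* + (x + y)·ω‖); in particular m(x, y) ≤ 2δ₀^{1/2}. -/

import Mathlib

open scoped InnerProductSpace

/-- `‖t‖`: the distance from a real number `t` to the nearest integer. -/
noncomputable def distToInt (t : ℝ) : ℝ := |t - round t|

/-- The ℓ¹ norm `‖x‖₁ = Σᵢ |xᵢ|` on `ℤ^d`. -/
def nrm1 {d : ℕ} (x : Fin d → ℤ) : ℤ := ∑ i, |x i|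

/-- The dot product `x·ω` for `x ∈ ℤ^d`, `ω ∈ ℝ^d`. -/
noncomputable def dotw {d : ℕ} (x : Fin d → ℤ) (ω : Fin d → ℝ) : ℝ := ∑ i, (x i : ℝ) * ω i

/-- The ℓ¹ norm on `ℝ^d`. -/
noncomputable def nrm1R {d : ℕ} (x : Fin d → ℝ) : ℝ := ∑ i, |x i|

/-- The dot product on `ℝ^d`. -/
noncomputable def dotwR {d : ℕ} (x ω : Fin d → ℝ) : ℝ := ∑ i, x i * ω i

/-- The standing hypotheses on the `C²`-cosine like potential `v` with parameter `a`:
`v` is `C²`, even and `1`-periodic, `0` is a nondegenerate maximum, `1/2` is a nondegenerate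
minimum, these are the only critical points modulo `1`, `|v''| > 3` near `0` and `1/2`
(within distance `a`), and `|v'| > 3` away from `0` and `1/2`. -/
structure CosLike (v : ℝ → ℝ) (a : ℝ) : Prop where
  smooth : ContDiff ℝ 2 v
  even : ∀ θ, v (-θ) = v θ
  periodic : ∀ θ, v (θ + 1) = v θ
  a_pos : 0 < a
  a_lt : a < 1 / 10
  critMax : deriv v 0 = 0
  critMax' : deriv (deriv v) 0 < 0
  critMin : deriv v (1 / 2) = 0
  critMin' : 0 < deriv (deriv v) (1 / 2)
  onlyCrit : ∀ θ ∈ Set.Ico (0 : ℝ) 1, deriv v θ = 0 → θ = 0 ∨ θ = 1 / 2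
  deriv2_big : ∀ θ, (distToInt θ < a ∨ distToInt (θ - 1 / 2) < a) → 3 < |deriv (deriv v) θ|
  deriv_big : ∀ θ, a ≤ distToInt θ → a ≤ distToInt (θ - 1 / 2) → 3 < |deriv v θ|

/-- `M₁ = sup_θ max(|v(θ)|, |v'(θ)|, |v''(θ)|)`. -/
noncomputable def M1 (v : ℝ → ℝ) : ℝ :=
  ⨆ θ : ℝ, max |v θ| (max |deriv v θ| |deriv (deriv v) θ|)

/-- The finite-volume Schrödinger operator `H_Λ(θ) = ε Δ + v(θ + x·ω) δ_{x,y}` as a matrix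
indexed by a finite set `Λ ⊂ ℤ^d`. -/
noncomputable def Hmat {d : ℕ} (ε : ℝ) (v : ℝ → ℝ) (ω : Fin d → ℝ) (θ : ℝ)
    (Λ : Finset (Fin d → ℤ)) : Matrix Λ Λ ℝ :=
  Matrix.of fun x y =>
    if nrm1 (x.1 - y.1) = 1 then ε
    else if x = y then v (θ + dotw x.1 ω) else 0

/-- The discrete ℓ¹-ball `{x ∈ ℤ^d : ‖x − c‖₁ ≤ r}` as a `Finset`. -/
noncomputable def ball1 {d : ℕ} (c : Fin d → ℤ) (r : ℝ) : Finset (Fin d → ℤ) :=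
  (Finset.Icc (fun i => c i - ⌈r⌉) (fun i => c i + ⌈r⌉)).filter
    fun x => ((nrm1 (x - c) : ℤ) : ℝ) ≤ r

/-- The discrete ℓ¹-ball around a (possibly non-integer) center `c ∈ ℝ^d`. -/
noncomputable def ballR {d : ℕ} (c : Fin d → ℝ) (r : ℝ) : Finset (Fin d → ℤ) :=
  (Finset.Icc (fun i => ⌊c i - r⌋ - 1) (fun i => ⌈c i + r⌉ + 1)).filter
    fun x => nrm1R (fun i => (x i : ℝ) - c i) ≤ r

/-- The nearest neighbours of `x` in `ℤ^d`. -/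
noncomputable def nbrs {d : ℕ} (x : Fin d → ℤ) : Finset (Fin d → ℤ) :=
  (Finset.Icc (fun i => x i - 1) (fun i => x i + 1)).filter fun y => nrm1 (y - x) = 1

/-- `δ₀ = ε₀^{1/20}`. -/
noncomputable def delta0 (ε₀ : ℝ) : ℝ := ε₀ ^ ((1 : ℝ) / 20)

/-!
Periodicity and evenness give `v θ = v ‖θ‖`, and for `s = ‖θ₁‖`, `t = ‖θ₂‖` one of
`‖θ₁ - θ₂‖`, `‖θ₁ + θ₂‖` is at most `|s - t|`. So everything reduces to a quantitative decrease of
`v` on `[0, 1/2]`: the sign of `v''` at the two critical points together with `|v''| > 3`,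
`|v'| > 3` force `v' ≤ -3θ` on `[0, 1/2 - a]`, `v' ≤ -3(1/2 - θ)` on `[a, 1/2]` and `v' < -3` on
`[a, 1/2 - a]`, and integrating these gives `(t - s)² ≤ v s - v t` for `0 ≤ s ≤ t ≤ 1/2`.
The upper bound `2δ₀` is the triangle inequality through `E*`.
-/

open Set

lemma distToInt_le (t : ℝ) (n : ℤ) : distToInt t ≤ |t - n| := round_le t n

lemma distToInt_eq_abs {t : ℝ} (ht : |t| ≤ 1 / 2) : distToInt t = |t| := by
  refine le_antisymm (by simpa using distToInt_le t 0) ?_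
  rcases eq_or_ne (round t) 0 with h | h
  · simp [distToInt, h]
  · have hn : (1 : ℝ) ≤ |(round t : ℝ)| := by exact_mod_cast Int.one_le_abs h
    have := abs_sub_abs_le_abs_sub (round t : ℝ) t
    rw [distToInt, abs_sub_comm]
    linarith

lemma abs_abs_sub_abs_eq_abs_sub_or_abs_add (u w : ℝ) :
    |(|u| - |w|)| = |u - w| ∨ |(|u| - |w|)| = |u + w| := by
  rcases abs_choice u with hu | hu <;> rcases abs_choice w with hw | hw <;> rw [hu, hw]
  · exact .inl rfl
  · exact .inr (by ring_nf)
  · exact .inr (by rw [← abs_neg]; ring_nf)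
  · exact .inl (by rw [← abs_neg]; ring_nf)

lemma min_distToInt_sub_add_le (α β : ℝ) :
    min (distToInt (α - β)) (distToInt (α + β)) ≤ |distToInt α - distToInt β| := by
  have hsub : distToInt (α - β) ≤ |(α - round α) - (β - round β)| := by
    simpa [sub_sub_sub_comm] using distToInt_le (α - β) (round α - round β)
  have hadd : distToInt (α + β) ≤ |(α - round α) + (β - round β)| := by
    simpa [add_sub_add_comm] using distToInt_le (α + β) (round α + round β)
  rcases abs_abs_sub_abs_eq_abs_sub_or_abs_add (α - round α) (β - round β) with h | h
  · exact (min_le_left _ _).trans (hsub.trans_eq h.symm)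
  · exact (min_le_right _ _).trans (hadd.trans_eq h.symm)

lemma distToInt_of_mem_Icc {θ : ℝ} (hθ : θ ∈ Icc (0 : ℝ) (1 / 2)) :
    distToInt θ = θ ∧ distToInt (θ - 1 / 2) = 1 / 2 - θ := by
  obtain ⟨h0, h1⟩ := hθ
  have h2 : |θ - 1 / 2| = 1 / 2 - θ := by rw [abs_of_nonpos (by linarith)]; ring
  refine ⟨?_, ?_⟩
  · rw [distToInt_eq_abs (by rwa [abs_of_nonneg h0]), abs_of_nonneg h0]
  · rw [distToInt_eq_abs (by linarith), h2]

lemma dotw_add {d : ℕ} (x y : Fin d → ℤ) (ω : Fin d → ℝ) :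
    dotw (x + y) ω = dotw x ω + dotw y ω := by
  simp only [dotw, Pi.add_apply, Int.cast_add, add_mul, Finset.sum_add_distrib]

lemma dotw_sub {d : ℕ} (x y : Fin d → ℤ) (ω : Fin d → ℝ) :
    dotw (x - y) ω = dotw x ω - dotw y ω := by
  simp only [dotw, Pi.sub_apply, Int.cast_sub, sub_mul, Finset.sum_sub_distrib]

lemma IsPreconnected.forall_lt_neg_of_lt_abs {f : ℝ → ℝ} {s : Set ℝ} {c x₀ : ℝ}
    (hs : IsPreconnected s) (hf : ContinuousOn f s) (hc : 0 ≤ c) (hbig : ∀ x ∈ s, c < |f x|)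
    (hx₀ : x₀ ∈ s) (hneg : f x₀ < 0) : ∀ x ∈ s, f x < -c := by
  intro x hx
  rcases lt_abs.1 (hbig x hx) with hpos | hlt
  · obtain ⟨z, hz, hfz⟩ := hs.intermediate_value hx₀ hx hf ⟨hneg.le, by linarith⟩
    have := hbig z hz
    rw [hfz, abs_zero] at this
    linarith
  · linarith

lemma sub_le_sub_of_hasDerivAt_le {f f' g g' : ℝ → ℝ} {p q : ℝ}
    (hf : ∀ x, HasDerivAt f (f' x) x) (hg : ∀ x, HasDerivAt g (g' x) x) (hpq : p ≤ q)
    (hle : ∀ x ∈ Ioo p q, f' x ≤ g' x) : f q - f p ≤ g q - g p := by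
  have hdiff : ∀ x, HasDerivAt (g - f) (g' x - f' x) x := fun x => (hg x).sub (hf x)
  have hmono : MonotoneOn (g - f) (Icc p q) := by
    refine monotoneOn_of_deriv_nonneg (convex_Icc p q)
      (fun x _ => (hdiff x).continuousAt.continuousWithinAt)
      (fun x _ => (hdiff x).differentiableAt.differentiableWithinAt) fun x hx => ?_
    rw [interior_Icc] at hx
    rw [(hdiff x).deriv, sub_nonneg]
    exact hle x hx
  have := hmono (left_mem_Icc.2 hpq) (right_mem_Icc.2 hpq) hpq
  simp only [Pi.sub_apply] at this
  linarith

lemma hasDerivAt_const_mul_sq (c x : ℝ) : HasDerivAt (fun θ => c * θ ^ 2) (2 * c * x) x :=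
  ((hasDerivAt_pow 2 x).const_mul c).congr_deriv (by norm_num; ring)

namespace CosLike

variable {v : ℝ → ℝ} {a : ℝ}

lemma differentiable (hv : CosLike v a) : Differentiable ℝ v :=
  hv.smooth.differentiable (by norm_num)

lemma contDiff_one_deriv (hv : CosLike v a) : ContDiff ℝ 1 (deriv v) :=
  ((contDiff_succ_iff_deriv (n := 1)).1 (by exact_mod_cast hv.smooth)).2.2

lemma differentiable_deriv (hv : CosLike v a) : Differentiable ℝ (deriv v) :=
  hv.contDiff_one_deriv.differentiable (by norm_num)

lemma continuous_deriv_deriv (hv : CosLike v a) : Continuous (deriv (deriv v)) :=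
  hv.contDiff_one_deriv.continuous_deriv le_rfl

lemma apply_distToInt (hv : CosLike v a) (θ : ℝ) : v (distToInt θ) = v θ := by
  have hper : v (θ - round θ) = v θ := by
    simpa using (Function.Periodic.sub_int_mul_eq hv.periodic (x := θ) (round θ))
  rcases abs_choice (θ - round θ) with h | h <;> rw [distToInt, h]
  · exact hper
  · rw [hv.even, hper]

lemma deriv_deriv_lt_neg_three (hv : CosLike v a) : ∀ θ ∈ Ico 0 a, deriv (deriv v) θ < -3 := by
  refine isPreconnected_Ico.forall_lt_neg_of_lt_abs hv.continuous_deriv_deriv.continuousOn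
    (by norm_num) (fun θ hθ => hv.deriv2_big θ (.inl ?_)) (left_mem_Ico.2 hv.a_pos) hv.critMax'
  rw [(distToInt_of_mem_Icc ⟨hθ.1, by linarith [hθ.2, hv.a_lt]⟩).1]
  exact hθ.2

lemma three_lt_deriv_deriv (hv : CosLike v a) :
    ∀ θ ∈ Ioc (1 / 2 - a) (1 / 2), 3 < deriv (deriv v) θ := by
  intro θ hθ
  refine neg_lt_neg_iff.1 (isPreconnected_Ioc.forall_lt_neg_of_lt_abs
    hv.continuous_deriv_deriv.neg.continuousOn (by norm_num) (fun ζ hζ => ?_)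
    (right_mem_Ioc.2 (by linarith [hv.a_pos])) (neg_neg_of_pos hv.critMin') θ hθ)
  rw [Pi.neg_apply, abs_neg]
  refine hv.deriv2_big ζ (.inr ?_)
  rw [(distToInt_of_mem_Icc ⟨by linarith [hζ.1, hv.a_lt], hζ.2⟩).2]
  linarith [hζ.1]

lemma deriv_le_near_zero (hv : CosLike v a) {θ : ℝ} (hθ : θ ∈ Icc 0 a) :
    deriv v θ ≤ -3 * θ := by
  have := sub_le_sub_of_hasDerivAt_le (fun x => (hv.differentiable_deriv x).hasDerivAt)
    (fun x => (hasDerivAt_id x).const_mul (-3)) hθ.1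
    fun x hx => by linarith [hv.deriv_deriv_lt_neg_three x ⟨hx.1.le, hx.2.trans_le hθ.2⟩]
  simp only [hv.critMax, id, mul_zero] at this
  linarith

lemma deriv_le_near_half (hv : CosLike v a) {θ : ℝ} (hθ : θ ∈ Icc (1 / 2 - a) (1 / 2)) :
    deriv v θ ≤ -3 * (1 / 2 - θ) := by
  have := sub_le_sub_of_hasDerivAt_le (fun x => (hasDerivAt_id x).const_mul 3)
    (fun x => (hv.differentiable_deriv x).hasDerivAt) hθ.2
    fun x hx => by linarith [hv.three_lt_deriv_deriv x ⟨hθ.1.trans_lt hx.1, hx.2.le⟩]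
  simp only [hv.critMin, id] at this
  linarith

lemma deriv_lt_neg_three (hv : CosLike v a) : ∀ θ ∈ Icc a (1 / 2 - a), deriv v θ < -3 := by
  have ha := hv.a_pos
  have ha' := hv.a_lt
  refine isPreconnected_Icc.forall_lt_neg_of_lt_abs hv.differentiable_deriv.continuous.continuousOn
    (by norm_num) (fun θ hθ => ?_) (left_mem_Icc.2 (by linarith))
    ((hv.deriv_le_near_zero ⟨ha.le, le_rfl⟩).trans_lt (by linarith))
  obtain ⟨h0, h1⟩ := distToInt_of_mem_Icc (θ := θ) ⟨by linarith [hθ.1], by linarith [hθ.2]⟩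
  exact hv.deriv_big θ (by rw [h0]; exact hθ.1) (by rw [h1]; linarith [hθ.2])

lemma deriv_le_left (hv : CosLike v a) {θ : ℝ} (hθ : θ ∈ Icc 0 (1 / 2 - a)) :
    deriv v θ ≤ -3 * θ := by
  rcases le_or_gt θ a with h | h
  · exact hv.deriv_le_near_zero ⟨hθ.1, h⟩
  · linarith [hv.deriv_lt_neg_three θ ⟨h.le, hθ.2⟩, hθ.2, hv.a_pos]

lemma deriv_le_right (hv : CosLike v a) {θ : ℝ} (hθ : θ ∈ Icc a (1 / 2)) :
    deriv v θ ≤ -3 * (1 / 2 - θ) := by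
  rcases le_or_gt θ (1 / 2 - a) with h | h
  · linarith [hv.deriv_lt_neg_three θ ⟨hθ.1, h⟩, hθ.1, hv.a_pos]
  · exact hv.deriv_le_near_half ⟨h.le, hθ.2⟩

lemma sq_sub_le_sub (hv : CosLike v a) {s t : ℝ} (hs : 0 ≤ s) (hst : s ≤ t) (ht : t ≤ 1 / 2) :
    (t - s) ^ 2 ≤ v s - v t := by
  have ha := hv.a_pos
  have ha' := hv.a_lt
  have hv' : ∀ x, HasDerivAt v (deriv v x) x := fun x => (hv.differentiable x).hasDerivAt
  have hleft : ∀ {p q}, 0 ≤ p → p ≤ q → q ≤ 1 / 2 - a →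
      v q - v p ≤ -3 / 2 * q ^ 2 - -3 / 2 * p ^ 2 := fun hp hpq hq =>
    sub_le_sub_of_hasDerivAt_le hv' (fun x => hasDerivAt_const_mul_sq (-3 / 2) x) hpq
      fun x hx => by linarith [hv.deriv_le_left ⟨hp.trans hx.1.le, hx.2.le.trans hq⟩]
  have hright : ∀ {p q}, a ≤ p → p ≤ q → q ≤ 1 / 2 →
      v q - v p ≤ 3 / 2 * (q - 1 / 2) ^ 2 - 3 / 2 * (p - 1 / 2) ^ 2 := fun hp hpq hq =>
    sub_le_sub_of_hasDerivAt_le hv'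
      (fun x => (hasDerivAt_const_mul_sq (3 / 2) (x - 1 / 2)).comp_sub_const x (1 / 2)) hpq
      fun x hx => by linarith [hv.deriv_le_right ⟨hp.trans hx.1.le, hx.2.le.trans hq⟩]
  rcases le_or_gt t (1 / 2 - a) with htl | htr
  · nlinarith [hleft hs hst htl]
  rcases le_or_gt a s with hsr | hsl
  · nlinarith [hright hsr hst ht]
  -- the middle stretch `[a, 1/2 - a]`, where `v' < -3`, alone accounts for a drop of more than `1/4`
  have hmid := sub_le_sub_of_hasDerivAt_le hv' (fun x => (hasDerivAt_id x).const_mul (-3))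
    (by linarith : a ≤ 1 / 2 - a)
    fun x hx => by linarith [hv.deriv_lt_neg_three x ⟨hx.1.le, hx.2.le⟩]
  simp only [id] at hmid
  nlinarith [hleft hs hsl.le (by linarith), hright (by linarith) htr.le ht]

lemma sq_sub_le_abs_sub (hv : CosLike v a) {s t : ℝ} (hs : s ∈ Icc (0 : ℝ) (1 / 2))
    (ht : t ∈ Icc (0 : ℝ) (1 / 2)) : (s - t) ^ 2 ≤ |v s - v t| := by
  rcases le_total s t with h | h
  · rw [← neg_sub, neg_sq]
    exact (hv.sq_sub_le_sub hs.1 h ht.2).trans (le_abs_self _)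
  · rw [abs_sub_comm]
    exact (hv.sq_sub_le_sub ht.1 h hs.2).trans (le_abs_self _)

end CosLike

theorem statement2_general (v : ℝ → ℝ) (a : ℝ) (hv : CosLike v a) {d : ℕ}
    (ω : Fin d → ℝ)
    (θs Es ε₀ : ℝ)
    (x y : Fin d → ℤ)
    (hx : |v (θs + dotw x ω) - Es| < delta0 ε₀)
    (hy : |v (θs + dotw y ω) - Es| < delta0 ε₀) :
    min (distToInt (dotw (x - y) ω)) (distToInt (2 * θs + dotw (x + y) ω)) ^ 2
        ≤ |v (θs + dotw x ω) - v (θs + dotw y ω)| ∧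
      |v (θs + dotw x ω) - v (θs + dotw y ω)| ≤ 2 * delta0 ε₀ ∧
      min (distToInt (dotw (x - y) ω)) (distToInt (2 * θs + dotw (x + y) ω))
        ≤ 2 * delta0 ε₀ ^ ((1 : ℝ) / 2) := by
  set θ₁ := θs + dotw x ω
  set θ₂ := θs + dotw y ω
  rw [show dotw (x - y) ω = θ₁ - θ₂ by rw [dotw_sub]; ring,
    show 2 * θs + dotw (x + y) ω = θ₁ + θ₂ by rw [dotw_add]; ring]
  set m := min (distToInt (θ₁ - θ₂)) (distToInt (θ₁ + θ₂))
  have hm₀ : 0 ≤ m := le_min (abs_nonneg _) (abs_nonneg _)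
  have hlower : m ^ 2 ≤ |v θ₁ - v θ₂| := by
    rw [← hv.apply_distToInt θ₁, ← hv.apply_distToInt θ₂]
    calc m ^ 2 ≤ |distToInt θ₁ - distToInt θ₂| ^ 2 :=
          pow_le_pow_left₀ hm₀ (min_distToInt_sub_add_le θ₁ θ₂) 2
      _ ≤ |v (distToInt θ₁) - v (distToInt θ₂)| := by
          rw [sq_abs]
          exact hv.sq_sub_le_abs_sub ⟨abs_nonneg _, abs_sub_round θ₁⟩
            ⟨abs_nonneg _, abs_sub_round θ₂⟩
  have hupper : |v θ₁ - v θ₂| ≤ 2 * delta0 ε₀ := by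
    linarith [abs_sub_le (v θ₁) Es (v θ₂), abs_sub_comm Es (v θ₂)]
  refine ⟨hlower, hupper, ?_⟩
  have hδ : 0 ≤ delta0 ε₀ := (abs_nonneg _).trans hx.le
  rw [← Real.sqrt_eq_rpow, ← pow_le_pow_iff_left₀ hm₀ (by positivity) two_ne_zero, mul_pow,
    Real.sq_sqrt hδ]
  linarith

/-- Center Theorem at step 0: if `x, y ∈ Q₀` then
`m(x,y)² ≤ |v(θ* + x·ω) − v(θ* + y·ω)| ≤ 2δ₀`, where
`m(x,y) = min(‖(x − y)·ω‖, ‖2θ* + (x + y)·ω‖)`; in particular `m(x,y) ≤ 2δ₀^{1/2}`. -/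
theorem statement2 (v : ℝ → ℝ) (a : ℝ) (hv : CosLike v a) {d : ℕ}
    (ω : Fin d → ℝ) (hω : ∀ i, ω i ∈ Set.Icc (0 : ℝ) 1)
    (θs Es ε₀ : ℝ) (hε₀ : 0 < ε₀)
    (x y : Fin d → ℤ)
    (hx : |v (θs + dotw x ω) - Es| < delta0 ε₀)
    (hy : |v (θs + dotw y ω) - Es| < delta0 ε₀) :
    min (distToInt (dotw (x - y) ω)) (distToInt (2 * θs + dotw (x + y) ω)) ^ 2
        ≤ |v (θs + dotw x ω) - v (θs + dotw y ω)| ∧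
      |v (θs + dotw x ω) - v (θs + dotw y ω)| ≤ 2 * delta0 ε₀ ∧
      min (distToInt (dotw (x - y) ω)) (distToInt (2 * θs + dotw (x + y) ω))
        ≤ 2 * delta0 ε₀ ^ ((1 : ℝ) / 2) :=
  statement2_general v a hv ω θs Es ε₀ x y hx hy
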